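/- Let G be a finite group, 𝓕 a family of subgroups closed under conjugation and taking subgroups, R a commutative ring with 1, n : S(G) → ℤ a conjugation-invariant function with n(H) = -1 for H ∉ 𝓕, and let C be a projective chain complex of RΓ_G-modules which is an R-homology n-sphere. Assume condition (iii): whenever H, K, L ∈ 𝓕 satisfy H ≤ K, H ≤ L and n(H) = n(K) = n(L) > -1, the subgroup ⟨K, L⟩ generated by K and L lies in 𝓕 and n(⟨K, L⟩) = n(H). Then for each H ∈ 𝓕 the set 𝓕_H = {K ∈ 𝓕 : (H) ≤ (K) and n(K) = n(H) > -1} has a unique maximal element up to conjugation: if 𝓕_H is nonempty, there exists M ∈ 𝓕_H such that (K) ≤ (M) for every K ∈ 𝓕_H, and any two such M are conjugate in G. -/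

import Mathlib

open CategoryTheory CategoryTheory.Limits Opposite

/-! Core: orbit category over a family of subgroups, modules over it,
chain complexes, dimension functions, homology spheres. -/

/-- The conjugate subgroup `g K g⁻¹`. -/
def conjSub {G : Type} [Group G] (g : G) (K : Subgroup G) : Subgroup G :=
  K.map (MulAut.conj g).toMonoidHom

/-- A family of subgroups of `G`, closed under conjugation and under taking subgroups. -/
structure SubgroupFamily (G : Type) [Group G] : Type where
  mem : Subgroup G → Prop
  conj_mem : ∀ (g : G) (K : Subgroup G), mem K → mem (conjSub g K)
  le_mem : ∀ (H K : Subgroup G), H ≤ K → mem K → mem H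

/-- `(H) ≤ (K)` : some conjugate of `H` is contained in `K`, i.e. `g⁻¹ H g ≤ K` for some `g`. -/
def ConjLE {G : Type} [Group G] (H K : Subgroup G) : Prop := ∃ g : G, H ≤ conjSub g K

/-- A conjugation-invariant (super class) function. -/
def ConjInv {G : Type} [Group G] (n : Subgroup G → ℤ) : Prop :=
  ∀ (g : G) (K : Subgroup G), n (conjSub g K) = n K

/-- Monotone super class function: `n(H) ≥ n(K)` whenever `(H) ≤ (K)`. -/
def MonotoneConj {G : Type} [Group G] (n : Subgroup G → ℤ) : Prop :=
  ∀ H K : Subgroup G, ConjLE H K → n K ≤ n H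

/-- Objects of the orbit category `Or_𝓕 G`: orbits `G/K` with `K ∈ 𝓕`. -/
def OrbitObj {G : Type} [Group G] (F : SubgroupFamily G) : Type := {K : Subgroup G // F.mem K}

/-- The orbit category: morphisms `G/K → G/L` are the `G`-equivariant maps. -/
instance {G : Type} [Group G] (F : SubgroupFamily G) : Category (OrbitObj F) where
  Hom K L := (G ⧸ K.1) →[G] (G ⧸ L.1)
  id K := MulActionHom.id G
  comp f g := g.comp f

/-- The category of `RΓ_G`-modules: contravariant functors from the orbit
category to `R`-modules. -/
abbrev OrbitMod (R : Type) [CommRing R] {G : Type} [Group G] (F : SubgroupFamily G) :=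
  (OrbitObj F)ᵒᵖ ⥤ ModuleCat.{0} R

variable {G : Type} [Group G] {R : Type} [CommRing R] {F : SubgroupFamily G}

/-- The free `RΓ_G`-module `R[G/H^?]`, with value the free `R`-module on
`Map_G(G/K, G/H)` at the object `G/K`. -/
noncomputable def freeAt (R : Type) [CommRing R] {G : Type} [Group G] {F : SubgroupFamily G}
    (H : OrbitObj F) : OrbitMod R F where
  obj K := ModuleCat.of R ((K.unop ⟶ H) →₀ R)
  map f := ModuleCat.ofHom (Finsupp.lmapDomain R R (fun u => f.unop ≫ u))
  map_id K := by
    ext1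
    simp only [unop_id, Category.id_comp, ModuleCat.hom_ofHom, ModuleCat.hom_id]
    exact Finsupp.lmapDomain_id R R
  map_comp f g := by
    ext1
    simp only [unop_comp, Category.assoc, ModuleCat.hom_ofHom, ModuleCat.hom_comp]
    exact Finsupp.lmapDomain_comp R R _ _

/-- A free `RΓ_G`-module: a direct sum of modules `R[G/H^?]`, `H ∈ 𝓕`. -/
def IsFreeMod (M : OrbitMod R F) : Prop :=
  ∃ (ι : Type) (b : ι → OrbitObj F), Nonempty (M ≅ ∐ (fun i => freeAt R (b i)))

/-- A finitely generated `RΓ_G`-module: admits an epimorphism from a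
finitely generated free module. -/
def IsFGMod (M : OrbitMod R F) : Prop :=
  ∃ (ι : Type) (_ : Fintype ι) (b : ι → OrbitObj F)
    (π : (∐ (fun i => freeAt R (b i))) ⟶ M), Epi π

/-- A projective `RΓ_G`-module: a direct summand of a free module. -/
def IsProjMod (M : OrbitMod R F) : Prop :=
  ∃ (Fr : OrbitMod R F), IsFreeMod Fr ∧ ∃ (s : M ⟶ Fr) (r : Fr ⟶ M), s ≫ r = 𝟙 M

/-- Chain complexes of `RΓ_G`-modules (non-negatively graded). -/
abbrev OrbitComplex (R : Type) [CommRing R] {G : Type} [Group G] (F : SubgroupFamily G) :=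
  ChainComplex (OrbitMod R F) ℕ

/-- The chain complex `C` vanishes at the object `G/K` in degree `i`. -/
def IsZeroAt (C : OrbitComplex R F) (K : OrbitObj F) (i : ℕ) : Prop :=
  Subsingleton ((C.X i).obj (op K))

/-- The chain complex `C` is finite-dimensional: `C_i = 0` for all large `i`. -/
def IsFiniteDimC (C : OrbitComplex R F) : Prop :=
  ∃ n : ℕ, ∀ i : ℕ, n < i → ∀ K : OrbitObj F, IsZeroAt C K i

/-- The chain complex `C` is finite: finite-dimensional with finitely
generated chain modules. -/
def IsFiniteC (C : OrbitComplex R F) : Prop :=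
  IsFiniteDimC C ∧ ∀ i : ℕ, IsFGMod (C.X i)

/-- `dim C(K)`: the largest `d` with `C_d(K) ≠ 0` (or `-1` for the zero complex). -/
noncomputable def dimAt (C : OrbitComplex R F) (K : OrbitObj F) : ℤ :=
  sSup (insert (-1 : ℤ) {d : ℤ | ∃ i : ℕ, (i : ℤ) = d ∧ ¬ IsZeroAt C K i})

/-- The dimension function `Dim C : S(G) → ℤ`, with value `-1` outside `𝓕`. -/
noncomputable def DimFun (C : OrbitComplex R F) : Subgroup G → ℤ := fun H =>
  open scoped Classical in
  if h : F.mem H then dimAt C ⟨H, h⟩ else -1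

/-- The augmented complex `⋯ → C₁ → C₀ → M → 0` (with `M` placed in degree `0`,
i.e. the whole complex shifted up by one). -/
noncomputable def augment {V : Type 1} [Category.{0} V] [Abelian V]
    (C : ChainComplex V ℕ) (M : V) (π : C.X 0 ⟶ M) (h : C.d 1 0 ≫ π = 0) :
    ChainComplex V ℕ :=
  ChainComplex.of
    (fun j => match j with
      | 0 => M
      | (i+1) => C.X i)
    (fun j => match j with
      | 0 => π
      | (i+1) => C.d (i+1) i)
    (fun j => match j with
      | 0 => h
      | (i+1) => C.d_comp_d (i+2) (i+1) i)

/-- The constant coefficient system `R̲`. -/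
noncomputable def constR (R : Type) [CommRing R] {G : Type} [Group G] (F : SubgroupFamily G) :
    OrbitMod R F :=
  (Functor.const (OrbitObj F)ᵒᵖ).obj (ModuleCat.of R R)

/-- Evaluation of a chain complex over `RΓ_G` at the object `G/K`. -/
noncomputable def evalC (C : OrbitComplex R F) (K : OrbitObj F) :
    ChainComplex (ModuleCat.{0} R) ℕ where
  X i := (C.X i).obj (op K)
  d i j := (C.d i j).app (op K)
  shape i j hij := by rw [C.shape i j hij]; rfl
  d_comp_d' i j k _ _ := by
    rw [← NatTrans.comp_app, C.d_comp_d]; rfl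

/-- The augmented complex of `C(K)` (with `R` in degree `-1`, shifted up by one). -/
noncomputable def augC (C : OrbitComplex R F) (ε : C.X 0 ⟶ constR R F)
    (h : C.d 1 0 ≫ ε = 0) (K : OrbitObj F) : ChainComplex (ModuleCat.{0} R) ℕ :=
  augment (evalC C K) (ModuleCat.of R R) (ε.app (op K))
    (by show (C.d 1 0).app (op K) ≫ ε.app (op K) = 0
        rw [show (C.d 1 0).app (op K) ≫ ε.app (op K) = (C.d 1 0 ≫ ε).app (op K) from rfl, h]; rfl)

/-- `C` is an `R`-homology `n`-sphere: there is an augmentation `ε : C₀ → R̲`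
such that for every `K ∈ 𝓕` the reduced homology of `C(K)` is that of the
sphere `S^{n(K)}` with coefficients in `R`.  (The homology of the augmented
complex — shifted up by one — is `R` in degree `n(K)+1` and zero elsewhere.) -/
noncomputable def IsHomologySphere (C : OrbitComplex R F) (n : Subgroup G → ℤ) : Prop :=
  ∃ (ε : C.X 0 ⟶ constR R F) (h : C.d 1 0 ≫ ε = 0),
    (∀ K : OrbitObj F, (∃ i, ¬ IsZeroAt C K i) → Function.Surjective (ε.app (op K))) ∧
    ∀ (K : OrbitObj F) (j : ℕ),
      (if (j : ℤ) = n K.1 + 1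
        then Nonempty ((augC C ε h K).homology j ≅ ModuleCat.of R R)
        else Subsingleton ((augC C ε h K).homology j))

/-- The chain map `C(K) → C(H)` induced by a `G`-map `f : G/H → G/K`. -/
noncomputable def evalMap (C : OrbitComplex R F) {H K : OrbitObj F} (f : H ⟶ K) :
    evalC C K ⟶ evalC C H where
  f i := (C.X i).map f.op
  comm' i j _ := (C.d i j).naturality f.op

/-- Condition (ii) of an algebraic homotopy representation: if `n(H) = n(K)`,
every `G`-map `f : G/H → G/K` induces an `R`-homology isomorphism `C(K) → C(H)`. -/
noncomputable def CondII (C : OrbitComplex R F) (n : Subgroup G → ℤ) : Prop :=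
  ∀ (H K : OrbitObj F) (f : H ⟶ K), n H.1 = n K.1 →
    ∀ i : ℕ, IsIso (HomologicalComplex.homologyMap (evalMap C f) i)

/-- Condition (iii) of an algebraic homotopy representation. -/
def CondIII (F : SubgroupFamily G) (n : Subgroup G → ℤ) : Prop :=
  ∀ H K L : Subgroup G, F.mem H → F.mem K → F.mem L → H ≤ K → H ≤ L →
    n H = n K → n H = n L → -1 < n H → F.mem (K ⊔ L) ∧ n (K ⊔ L) = n H

/-- The set `𝓕_H = {K ∈ 𝓕 | (H) ≤ (K), n(K) = n(H) > -1}`. -/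
def FH {G : Type} [Group G] (F : SubgroupFamily G) (n : Subgroup G → ℤ)
    (H : Subgroup G) : Set (Subgroup G) :=
  {K | F.mem K ∧ ConjLE H K ∧ n K = n H ∧ -1 < n H}

/-! Pick `M ∈ 𝓕_H` of largest order. For `K ∈ 𝓕_H`, condition (iii) applied to conjugates of `K`
and `M` containing `H` puts their join in `𝓕_H`; by maximality of the order of `M` the join is the
conjugate of `M`, so `K` is subconjugate to `M`. Two subgroups subconjugate to each other in a finite
group are conjugate, which gives uniqueness. -/

lemma conjSub_one (K : Subgroup G) : conjSub 1 K = K := by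
  ext x
  simp [conjSub, Subgroup.mem_map]

lemma conjSub_conjSub (a b : G) (K : Subgroup G) :
    conjSub a (conjSub b K) = conjSub (a * b) K := by
  simp only [conjSub, Subgroup.map_map, map_mul]
  rfl

lemma conjSub_mono (g : G) {K L : Subgroup G} (h : K ≤ L) : conjSub g K ≤ conjSub g L :=
  Subgroup.map_mono h

lemma le_conjSub_inv_mul {g g' : G} {K M : Subgroup G} (h : conjSub g K ≤ conjSub g' M) :
    K ≤ conjSub (g⁻¹ * g') M := by
  calc K = conjSub g⁻¹ (conjSub g K) := by rw [conjSub_conjSub, inv_mul_cancel, conjSub_one]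
    _ ≤ conjSub g⁻¹ (conjSub g' M) := conjSub_mono g⁻¹ h
    _ = conjSub (g⁻¹ * g') M := conjSub_conjSub g⁻¹ g' M

lemma card_conjSub (g : G) (K : Subgroup G) : Nat.card (conjSub g K) = Nat.card K :=
  Nat.card_congr (K.equivMapOfInjective _ (MulAut.conj g).injective).toEquiv.symm

lemma ConjLE.exists_conjSub_eq [Finite G] {K L : Subgroup G} (hKL : ConjLE K L)
    (hLK : ConjLE L K) : ∃ g : G, conjSub g L = K := by
  obtain ⟨g, hg⟩ := hKL
  obtain ⟨g', hg'⟩ := hLK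
  have hcard : Nat.card L ≤ Nat.card K := card_conjSub g' K ▸ Subgroup.card_le_of_le hg'
  exact ⟨g, (Subgroup.eq_of_le_of_card_ge hg (by rwa [card_conjSub])).symm⟩

lemma exists_forall_conjLE_of_conjSub_sup_mem [Finite G] {S : Set (Subgroup G)}
    (hS : S.Nonempty)
    (hsup : ∀ K ∈ S, ∀ L ∈ S, ∃ g g' : G, conjSub g K ⊔ conjSub g' L ∈ S) :
    ∃ M ∈ S, ∀ K ∈ S, ConjLE K M := by
  obtain ⟨M, hM, hMmax⟩ :=
    Set.Finite.exists_maximalFor (fun K : Subgroup G => Nat.card K) S (Set.toFinite _) hS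
  refine ⟨M, hM, fun K hK => ?_⟩
  obtain ⟨g, g', hmem⟩ := hsup K hK M hM
  have hle : conjSub g' M ≤ conjSub g K ⊔ conjSub g' M := le_sup_right
  have hcard : Nat.card M ≤ Nat.card (conjSub g K ⊔ conjSub g' M : Subgroup G) :=
    card_conjSub g' M ▸ Subgroup.card_le_of_le hle
  have hjoin : conjSub g' M = conjSub g K ⊔ conjSub g' M :=
    Subgroup.eq_of_le_of_card_ge hle (by rw [card_conjSub]; exact hMmax hmem hcard)
  exact ⟨g⁻¹ * g', le_conjSub_inv_mul (hjoin ▸ le_sup_left)⟩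

lemma conjSub_sup_mem_FH {n : Subgroup G → ℤ}
    (hconj : ConjInv n) (hiii : CondIII F n) {H : Subgroup G} (hH : F.mem H)
    {K L : Subgroup G} (hK : K ∈ FH F n H) (hL : L ∈ FH F n H) :
    ∃ g g' : G, conjSub g K ⊔ conjSub g' L ∈ FH F n H := by
  obtain ⟨hKF, ⟨g, hHK⟩, hnK, hpos⟩ := hK
  obtain ⟨hLF, ⟨g', hHL⟩, hnL, -⟩ := hL
  obtain ⟨hsupF, hsupn⟩ := hiii H (conjSub g K) (conjSub g' L) hH (F.conj_mem g K hKF)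
    (F.conj_mem g' L hLF) hHK hHL (by rw [hconj, hnK]) (by rw [hconj, hnL]) hpos
  refine ⟨g, g', hsupF, ⟨1, ?_⟩, hsupn, hpos⟩
  rw [conjSub_one]
  exact hHK.trans le_sup_left

theorem statement1_general (G : Type) [Group G] [Finite G]
    (F : SubgroupFamily G) (n : Subgroup G → ℤ)
    (hconj : ConjInv n)
    (hiii : CondIII F n) :
    ∀ H : Subgroup G, F.mem H → (FH F n H).Nonempty →
      ∃ M ∈ FH F n H,
        (∀ K ∈ FH F n H, ConjLE K M) ∧
        (∀ M' ∈ FH F n H, (∀ K ∈ FH F n H, ConjLE K M') → ∃ g : G, conjSub g M = M') := by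
  intro H hH hne
  obtain ⟨M, hM, hMmax⟩ := exists_forall_conjLE_of_conjSub_sup_mem hne
    fun K hK L hL => conjSub_sup_mem_FH hconj hiii hH hK hL
  refine ⟨M, hM, hMmax, fun M' hM' hM'max => ?_⟩
  exact (hMmax M' hM').exists_conjSub_eq (hM'max M hM)

/-- cf. [HPY 2014, Proposition on maximality].  If `C` is a
projective chain complex over `RΓ_G` which is an `R`-homology `n`-sphere and
condition (iii) holds, then for each `H ∈ 𝓕` the set `𝓕_H` has a unique
maximal element up to conjugation. -/
theorem statement1 (G R : Type) [Group G] [Finite G] [CommRing R]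
    (F : SubgroupFamily G) (n : Subgroup G → ℤ)
    (hconj : ConjInv n) (hsupp : ∀ H : Subgroup G, ¬ F.mem H → n H = -1)
    (C : OrbitComplex R F) (hproj : ∀ i : ℕ, IsProjMod (C.X i))
    (hsphere : IsHomologySphere C n)
    (hiii : CondIII F n) :
    ∀ H : Subgroup G, F.mem H → (FH F n H).Nonempty →
      ∃ M ∈ FH F n H,
        (∀ K ∈ FH F n H, ConjLE K M) ∧
        (∀ M' ∈ FH F n H, (∀ K ∈ FH F n H, ConjLE K M') → ∃ g : G, conjSub g M = M') :=
  statement1_general G F n hconj hiii
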